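/- arXiv:2204.13977 — 4 statements merged into one kernel-verified Lean document; each statement's English description precedes it below -/
import Mathlib

section
/- For m ≥ 1 and n ≥ 3, the number of Type I(a) tandem occurrences in the Fibonacci array f_{m,n}, i.e. the number of tuples (i,j,r,l) with r,l ≥ 1, i+r ≤ F(m), j+2l ≤ F(n) such that f_{m,n}[(i,j);(r,l)] = f_{m,n}[(i,j+l);(r,l)], equals R(n) · F(m)(F(m)+1)/2, where R(n) is the number of square occurrences in the 1D Fibonacci word f_n. -/
/-- Fibonacci numbers: F(0)=1, F(1)=1, F(n+2)=F(n+1)+F(n). -/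
def F : ℕ → ℕ
  | 0 => 1
  | 1 => 1
  | n + 2 => F (n + 1) + F n

/-- Finite Fibonacci words over {a,b} coded as Fin 2 (a=0, b=1). -/
def fibWord : ℕ → List (Fin 2)
  | 0 => [0]
  | 1 => [1]
  | n + 2 => fibWord (n + 1) ++ fibWord n

/-- The Fibonacci arrays f_{m,n} over {a,b,c,d} coded as Fin 2 × Fin 2,
with a=(0,0), b=(0,1), c=(1,0), d=(1,1); `fibArr m n i j` is the (i,j) entry
(0-indexed, only indices i < F m, j < F n are meaningful). -/
def fibArr : ℕ → ℕ → ℕ → ℕ → Fin 2 × Fin 2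
  | 0, 0, _, _ => (0, 0)
  | 0, 1, _, _ => (0, 1)
  | 1, 0, _, _ => (1, 0)
  | 1, 1, _, _ => (1, 1)
  | 0, n + 2, i, j =>
      if j < F (n + 1) then fibArr 0 (n + 1) i j else fibArr 0 n i (j - F (n + 1))
  | 1, n + 2, i, j =>
      if j < F (n + 1) then fibArr 1 (n + 1) i j else fibArr 1 n i (j - F (n + 1))
  | m + 2, k, i, j =>
      if i < F (m + 1) then fibArr (m + 1) k i j else fibArr m k (i - F (m + 1)) j
  termination_by m n => (m, n)

/-- The r × l subarray of u with top-left entry at (i,j). -/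
def subarr (u : ℕ → ℕ → Fin 2 × Fin 2) (i j r l : ℕ) : Fin r × Fin l → Fin 2 × Fin 2 :=
  fun p => u (i + p.1.val) (j + p.2.val)

/-- Number of square occurrences in a finite word. -/
noncomputable def sqOcc (w : List (Fin 2)) : ℕ :=
  {p : ℕ × ℕ | 1 ≤ p.2 ∧ p.1 + 2 * p.2 ≤ w.length ∧
    ∀ t < p.2, w.getD (p.1 + t) 0 = w.getD (p.1 + p.2 + t) 0}.ncard

/-- R(n): number of square occurrences in f_n. -/
noncomputable def R (n : ℕ) : ℕ := sqOcc (fibWord n)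

/-!
The array `f_{m,n}` is the tensor product of the words `f_m` and `f_n`: its `(i,j)` entry is
`(f_m[i], f_n[j])`. Two horizontally adjacent `r × l` blocks with `r ≥ 1` therefore agree exactly
when the length-`l` factors of `f_n` at `j` and `j + l` agree, whatever the rows. A tandem is
thus an independent choice of a nonempty row interval `[i, i + r) ⊆ [0, F m)`, of which there are
`F m (F m + 1) / 2`, and of a square occurrence `(j, l)` in `f_n`.
-/

lemma fibWord_length (n : ℕ) : (fibWord n).length = F n := by
  induction n using Nat.strong_induction_on with
  | _ n ih =>
    match n with
    | 0 | 1 => rfl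
    | n + 2 => simp [fibWord, F, ih (n + 1) (by omega), ih n (by omega)]

lemma fibWord_getD_add_two (n j : ℕ) :
    (fibWord (n + 2)).getD j 0 =
      if j < F (n + 1) then (fibWord (n + 1)).getD j 0
      else (fibWord n).getD (j - F (n + 1)) 0 := by
  rw [fibWord]
  split_ifs with h
  · exact List.getD_append _ _ _ _ (by rwa [fibWord_length])
  · rw [List.getD_append_right _ _ _ _ (by rw [fibWord_length]; omega), fibWord_length]

lemma fibArr_eq_of_lt (m n i j : ℕ) (hi : i < F m) (hj : j < F n) :
    fibArr m n i j = ((fibWord m).getD i 0, (fibWord n).getD j 0) := by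
  fun_induction fibArr m n i j with
  | case1 | case2 | case3 | case4 =>
    simp only [F, Nat.lt_one_iff] at hi hj
    subst hi hj
    rfl
  | case5 n i j h ih | case7 n i j h ih =>
    rw [ih hi h, fibWord_getD_add_two, if_pos h]
  | case6 n i j h ih | case8 n i j h ih =>
    simp only [F] at hj
    rw [ih hi (by omega), fibWord_getD_add_two, if_neg h]
  | case9 m k i j h ih =>
    rw [ih h hj, fibWord_getD_add_two, if_pos h]
  | case10 m k i j h ih =>
    simp only [F] at hi
    rw [ih (by omega) hj, fibWord_getD_add_two, if_neg h]

lemma subarr_fibArr_eq_shift_iff {m n i j r l : ℕ} (hr : 0 < r) (hir : i + r ≤ F m)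
    (hjl : j + 2 * l ≤ F n) :
    subarr (fibArr m n) i j r l = subarr (fibArr m n) i (j + l) r l ↔
      ∀ t < l, (fibWord n).getD (j + t) 0 = (fibWord n).getD (j + l + t) 0 := by
  simp only [funext_iff, subarr, Prod.forall, Fin.forall_iff]
  constructor
  · intro h t ht
    have h0 := h 0 hr t ht
    rw [fibArr_eq_of_lt _ _ _ _ (by omega) (by omega), fibArr_eq_of_lt _ _ _ _ (by omega) (by omega)] at h0
    exact (Prod.ext_iff.mp h0).2
  · intro h a ha t ht
    rw [fibArr_eq_of_lt _ _ _ _ (by omega) (by omega), fibArr_eq_of_lt _ _ _ _ (by omega) (by omega), h t ht]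

lemma ncard_nonempty_intervals (N : ℕ) :
    {p : ℕ × ℕ | 1 ≤ p.2 ∧ p.1 + p.2 ≤ N}.ncard = N * (N + 1) / 2 := by
  have himage : {p : ℕ × ℕ | 1 ≤ p.2 ∧ p.1 + p.2 ≤ N} =
      (fun x : Σ _ : ℕ, ℕ => (x.2, x.1 - x.2)) '' ↑((Finset.range (N + 1)).sigma Finset.range) := by
    ext ⟨i, r⟩
    simp only [Set.mem_ofPred_eq, Set.mem_image, Finset.coe_sigma, Set.mem_sigma_iff,
      Finset.coe_range, Set.mem_Iio, Prod.mk.injEq, Sigma.exists]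
    constructor
    · rintro ⟨hr, hir⟩
      exact ⟨i + r, i, ⟨by omega, by omega⟩, rfl, by omega⟩
    · rintro ⟨k, a, ⟨hk, ha⟩, rfl, rfl⟩
      omega
  have hinj : Set.InjOn (fun x : Σ _ : ℕ, ℕ => (x.2, x.1 - x.2))
      ↑((Finset.range (N + 1)).sigma Finset.range) := by
    rintro ⟨k, a⟩ hka ⟨k', a'⟩ hka' h
    simp only [Finset.coe_sigma, Set.mem_sigma_iff, Finset.coe_range, Set.mem_Iio,
      Prod.mk.injEq] at hka hka' h
    obtain ⟨rfl, h⟩ := h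
    obtain rfl : k = k' := by omega
    rfl
  rw [himage, hinj.ncard_image, Set.ncard_coe_finset, Finset.card_sigma]
  simp only [Finset.card_range, Finset.sum_range_id, Nat.add_sub_cancel, mul_comm]

theorem stmt2_general (m n : ℕ) :
    {t : ℕ × ℕ × ℕ × ℕ | 1 ≤ t.2.2.1 ∧ 1 ≤ t.2.2.2 ∧
      t.1 + t.2.2.1 ≤ F m ∧ t.2.1 + 2 * t.2.2.2 ≤ F n ∧
      subarr (fibArr m n) t.1 t.2.1 t.2.2.1 t.2.2.2
        = subarr (fibArr m n) t.1 (t.2.1 + t.2.2.2) t.2.2.1 t.2.2.2}.ncard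
      = R n * (F m * (F m + 1) / 2) := by
  let e := (Equiv.prodAssoc ℕ ℕ (ℕ × ℕ)).symm.trans (Equiv.prodProdProdComm ℕ ℕ ℕ ℕ)
  calc
    _ = (e ⁻¹' ({p : ℕ × ℕ | 1 ≤ p.2 ∧ p.1 + p.2 ≤ F m} ×ˢ
          {p : ℕ × ℕ | 1 ≤ p.2 ∧ p.1 + 2 * p.2 ≤ (fibWord n).length ∧
            ∀ t < p.2, (fibWord n).getD (p.1 + t) 0 = (fibWord n).getD (p.1 + p.2 + t) 0})).ncard := by
      congr 1
      ext ⟨i, j, r, l⟩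
      simp only [Set.mem_ofPred_eq, Set.mem_preimage, Set.mem_prod, fibWord_length]
      constructor
      · rintro ⟨hr, hl, hir, hjl, hsq⟩
        exact ⟨⟨hr, hir⟩, hl, hjl, (subarr_fibArr_eq_shift_iff hr hir hjl).mp hsq⟩
      · rintro ⟨⟨hr, hir⟩, hl, hjl, hsq⟩
        exact ⟨hr, hl, hir, hjl, (subarr_fibArr_eq_shift_iff hr hir hjl).mpr hsq⟩
    _ = R n * (F m * (F m + 1) / 2) := by
      rw [Set.ncard_preimage_of_injective_subset_range e.injective (by simp), Set.ncard_prod,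
        ncard_nonempty_intervals, R, sqOcc, mul_comm]

/-- For m ≥ 1 and n ≥ 3, the number of Type I(a) tandem occurrences in the
Fibonacci array f_{m,n} — tuples (i,j,r,l) with r,l ≥ 1, i+r ≤ F(m), j+2l ≤ F(n) such that
f_{m,n}[(i,j);(r,l)] = f_{m,n}[(i,j+l);(r,l)] — equals R(n)·F(m)(F(m)+1)/2. -/
theorem stmt2 (m n : ℕ) (hm : 1 ≤ m) (hn : 3 ≤ n) :
    {t : ℕ × ℕ × ℕ × ℕ | 1 ≤ t.2.2.1 ∧ 1 ≤ t.2.2.2 ∧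
      t.1 + t.2.2.1 ≤ F m ∧ t.2.1 + 2 * t.2.2.2 ≤ F n ∧
      subarr (fibArr m n) t.1 t.2.1 t.2.2.1 t.2.2.2
        = subarr (fibArr m n) t.1 (t.2.1 + t.2.2.2) t.2.2.1 t.2.2.2}.ncard
      = R n * (F m * (F m + 1) / 2) :=
  stmt2_general m n
end

section
/- Let m,n ≥ 0 and let i,j,r,l satisfy r,l ≥ 1, i+2r ≤ F(m), j+2l ≤ F(n). Then in the Fibonacci array f_{m,n}, the diagonal blocks are equal, f_{m,n}[(i,j);(r,l)] = f_{m,n}[(i+r,j+l);(r,l)], if and only if all four blocks f_{m,n}[(i,j);(r,l)], f_{m,n}[(i,j+l);(r,l)], f_{m,n}[(i+r,j);(r,l)], f_{m,n}[(i+r,j+l);(r,l)] are equal. (In a Fibonacci array, a Type II(a) tandem occurs only as part of a quartic.) -/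
/-!
The Fibonacci array is an outer product: its entry at `(i, j)` pairs the `i`-th letter of the
Fibonacci word `f_m` with the `j`-th letter of `f_n`. Two blocks of such an array agree exactly
when their row ranges and their column ranges carry the same letters, so equal diagonal blocks
force the top and bottom rows and the left and right columns to agree, which makes all four
blocks equal.
-/

/-- For `i < F m`, `fibSeq m i` is the `i`-th letter of the Fibonacci word `fibWord m`. -/
def fibSeq : ℕ → ℕ → Fin 2
  | 0, _ => 0
  | 1, _ => 1
  | m + 2, i => if i < F (m + 1) then fibSeq (m + 1) i else fibSeq m (i - F (m + 1))

lemma fibArr_apply : ∀ m n i j, fibArr m n i j = (fibSeq m i, fibSeq n j)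
  | 0, 0, i, j | 0, 1, i, j | 1, 0, i, j | 1, 1, i, j => by simp [fibArr, fibSeq]
  | 0, n + 2, i, j | 1, n + 2, i, j => by
      rw [fibArr, fibSeq.eq_3]
      split <;> rw [fibArr_apply]
  | m + 2, n, i, j => by
      rw [fibArr.eq_7, fibSeq.eq_3]
      split <;> rw [fibArr_apply]
  termination_by m n => (m, n)

lemma subarr_prod_eq_iff (a b : ℕ → Fin 2) {i j i' j' r l : ℕ} (hr : 0 < r) (hl : 0 < l) :
    subarr (fun x y => (a x, b y)) i j r l = subarr (fun x y => (a x, b y)) i' j' r l ↔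
      (∀ t < r, a (i + t) = a (i' + t)) ∧ ∀ t < l, b (j + t) = b (j' + t) := by
  simp only [subarr, funext_iff, Prod.forall, Fin.forall_iff, Prod.mk.injEq]
  exact ⟨fun h => ⟨fun t ht => (h t ht 0 hl).1, fun t ht => (h 0 hr t ht).2⟩,
    fun h t ht s hs => ⟨h.1 t ht, h.2 s hs⟩⟩

theorem stmt4_general (m n i j r l : ℕ) (hr : 1 ≤ r) (hl : 1 ≤ l) :
    subarr (fibArr m n) i j r l = subarr (fibArr m n) (i + r) (j + l) r l ↔
      (subarr (fibArr m n) i j r l = subarr (fibArr m n) i (j + l) r l ∧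
       subarr (fibArr m n) i j r l = subarr (fibArr m n) (i + r) j r l ∧
       subarr (fibArr m n) i j r l = subarr (fibArr m n) (i + r) (j + l) r l) := by
  have hprod : fibArr m n = fun x y => (fibSeq m x, fibSeq n y) := funext₂ (fibArr_apply m n)
  simp only [hprod, subarr_prod_eq_iff _ _ hr hl]
  tauto

/-- In a Fibonacci array, for r,l ≥ 1 with i+2r ≤ F(m), j+2l ≤ F(n),
the diagonal blocks are equal (a Type II(a) tandem occurs) iff all four blocks are equal
(a quartic occurs). -/
theorem stmt4 (m n i j r l : ℕ) (hr : 1 ≤ r) (hl : 1 ≤ l)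
    (hi : i + 2 * r ≤ F m) (hj : j + 2 * l ≤ F n) :
    subarr (fibArr m n) i j r l = subarr (fibArr m n) (i + r) (j + l) r l ↔
      (subarr (fibArr m n) i j r l = subarr (fibArr m n) i (j + l) r l ∧
       subarr (fibArr m n) i j r l = subarr (fibArr m n) (i + r) j r l ∧
       subarr (fibArr m n) i j r l = subarr (fibArr m n) (i + r) (j + l) r l) :=
  stmt4_general m n i j r l hr hl
end

section
/- For m,n ≥ 3, the number of quartic occurrences in the Fibonacci array f_{m,n}, i.e. the number of tuples (i,j,r,l) with r,l ≥ 1, i+2r ≤ F(m), j+2l ≤ F(n) such that the four r × l subarrays of f_{m,n} with top-left corners (i,j), (i,j+l), (i+r,j), (i+r,j+l) are all equal, is exactly R(m)·R(n); consequently the number of Type II(a) tandem occurrences (tuples (i,j,r,l) as above with f_{m,n}[(i,j);(r,l)] = f_{m,n}[(i+r,j+l);(r,l)]) also equals R(m)·R(n). -/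
lemma ncard_setOf_mem_and_mem {α β γ δ : Type*} (A : Set (α × γ)) (B : Set (β × δ)) :
    {t : α × β × γ × δ | (t.1, t.2.2.1) ∈ A ∧ (t.2.1, t.2.2.2) ∈ B}.ncard =
      A.ncard * B.ncard := by
  let e := (Equiv.prodAssoc α β (γ × δ)).symm.trans (Equiv.prodProdProdComm α β γ δ)
  rw [← Set.ncard_prod]
  exact Set.ncard_preimage_of_injective_subset_range (s := A ×ˢ B) e.injective (by simp)

def fibLetter (k i : ℕ) : Fin 2 := (fibWord k).getD i 0

def fibSquares (k : ℕ) : Set (ℕ × ℕ) :=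
  {p | 1 ≤ p.2 ∧ p.1 + 2 * p.2 ≤ F k ∧
    ∀ t < p.2, fibLetter k (p.1 + t) = fibLetter k (p.1 + p.2 + t)}

lemma length_fibWord : ∀ k, (fibWord k).length = F k
  | 0 => rfl
  | 1 => rfl
  | k + 2 => by simp [fibWord, F, length_fibWord (k + 1), length_fibWord k]

lemma R_eq_ncard_fibSquares (k : ℕ) : R k = (fibSquares k).ncard := by
  simp [R, sqOcc, fibSquares, fibLetter, length_fibWord]

lemma fibLetter_add_two (k i : ℕ) :
    fibLetter (k + 2) i =
      if i < F (k + 1) then fibLetter (k + 1) i else fibLetter k (i - F (k + 1)) := by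
  unfold fibLetter
  split_ifs with h
  · exact List.getD_append _ _ _ _ (by rwa [length_fibWord])
  · rw [fibWord, List.getD_append_right _ _ _ _ (by rw [length_fibWord]; omega), length_fibWord]

theorem fibArr_eq_fibLetter {m n i j : ℕ} (hi : i < F m) (hj : j < F n) :
    fibArr m n i j = (fibLetter m i, fibLetter n j) := by
  induction m, n, i, j using fibArr.induct with
  | case1 i j | case2 i j | case3 i j | case4 i j =>
    simp only [F] at hi hj
    obtain rfl : i = 0 := by omega
    obtain rfl : j = 0 := by omega
    simp [fibArr, fibLetter, fibWord]
  | case5 _ _ j hj' ih | case7 _ _ j hj' ih =>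
    rw [fibArr, if_pos hj', ih hi hj', fibLetter_add_two, if_pos hj']
  | case6 n _ j hj' ih | case8 n _ j hj' ih =>
    simp only [F] at hj
    rw [fibArr, if_neg hj', ih hi (by omega), fibLetter_add_two n j, if_neg hj']
  | case9 _ _ i _ hi' ih =>
    rw [fibArr, if_pos hi', ih hi' hj, fibLetter_add_two, if_pos hi']
  | case10 m _ i _ hi' ih =>
    simp only [F] at hi
    rw [fibArr, if_neg hi', ih (by omega) hj, fibLetter_add_two m i, if_neg hi']

lemma subarr_fibArr {m n i j r l : ℕ} (hi : i + r ≤ F m) (hj : j + l ≤ F n) :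
    subarr (fibArr m n) i j r l = subarr (fun x y => (fibLetter m x, fibLetter n y)) i j r l := by
  funext p
  exact fibArr_eq_fibLetter (by omega) (by omega)

lemma subarr_fibArr_eq_iff {m n i j i' j' r l : ℕ} (hr : 0 < r) (hl : 0 < l)
    (hi : i + r ≤ F m) (hi' : i' + r ≤ F m) (hj : j + l ≤ F n) (hj' : j' + l ≤ F n) :
    subarr (fibArr m n) i j r l = subarr (fibArr m n) i' j' r l ↔
      (∀ t < r, fibLetter m (i + t) = fibLetter m (i' + t)) ∧
        ∀ t < l, fibLetter n (j + t) = fibLetter n (j' + t) := by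
  rw [subarr_fibArr hi hj, subarr_fibArr hi' hj', subarr_prod_eq_iff _ _ hr hl]

theorem stmt5_general (m n : ℕ) :
    ({t : ℕ × ℕ × ℕ × ℕ | 1 ≤ t.2.2.1 ∧ 1 ≤ t.2.2.2 ∧
      t.1 + 2 * t.2.2.1 ≤ F m ∧ t.2.1 + 2 * t.2.2.2 ≤ F n ∧
      subarr (fibArr m n) t.1 t.2.1 t.2.2.1 t.2.2.2
        = subarr (fibArr m n) t.1 (t.2.1 + t.2.2.2) t.2.2.1 t.2.2.2 ∧
      subarr (fibArr m n) t.1 t.2.1 t.2.2.1 t.2.2.2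
        = subarr (fibArr m n) (t.1 + t.2.2.1) t.2.1 t.2.2.1 t.2.2.2 ∧
      subarr (fibArr m n) t.1 t.2.1 t.2.2.1 t.2.2.2
        = subarr (fibArr m n) (t.1 + t.2.2.1) (t.2.1 + t.2.2.2) t.2.2.1 t.2.2.2}.ncard
      = R m * R n) ∧
    ({t : ℕ × ℕ × ℕ × ℕ | 1 ≤ t.2.2.1 ∧ 1 ≤ t.2.2.2 ∧
      t.1 + 2 * t.2.2.1 ≤ F m ∧ t.2.1 + 2 * t.2.2.2 ≤ F n ∧
      subarr (fibArr m n) t.1 t.2.1 t.2.2.1 t.2.2.2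
        = subarr (fibArr m n) (t.1 + t.2.2.1) (t.2.1 + t.2.2.2) t.2.2.1 t.2.2.2}.ncard
      = R m * R n) := by
  have hR : R m * R n = {t : ℕ × ℕ × ℕ × ℕ |
      (t.1, t.2.2.1) ∈ fibSquares m ∧ (t.2.1, t.2.2.2) ∈ fibSquares n}.ncard := by
    rw [ncard_setOf_mem_and_mem, R_eq_ncard_fibSquares, R_eq_ncard_fibSquares]
  rw [hR]
  constructor <;> congr 1 <;> ext ⟨i, j, r, l⟩ <;> simp only [Set.mem_ofPred_eq, fibSquares]
  · constructor
    · rintro ⟨hr, hl, hi, hj, -, -, h⟩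
      simp (disch := omega) only [subarr_fibArr_eq_iff] at h
      exact ⟨⟨hr, hi, h.1⟩, hl, hj, h.2⟩
    · rintro ⟨⟨hr, hi, hsm⟩, hl, hj, hsn⟩
      simp (disch := omega) only [subarr_fibArr_eq_iff, implies_true, true_and, and_true]
      exact ⟨hr, hl, hi, hj, hsn, hsm, hsm, hsn⟩
  · constructor
    · rintro ⟨hr, hl, hi, hj, h⟩
      simp (disch := omega) only [subarr_fibArr_eq_iff] at h
      exact ⟨⟨hr, hi, h.1⟩, hl, hj, h.2⟩
    · rintro ⟨⟨hr, hi, hsm⟩, hl, hj, hsn⟩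
      simp (disch := omega) only [subarr_fibArr_eq_iff]
      exact ⟨hr, hl, hi, hj, hsm, hsn⟩

/-- For m,n ≥ 3, the number of quartic occurrences in f_{m,n} is R(m)·R(n),
and consequently the number of Type II(a) tandem occurrences is also R(m)·R(n). -/
theorem stmt5 (m n : ℕ) (hm : 3 ≤ m) (hn : 3 ≤ n) :
    ({t : ℕ × ℕ × ℕ × ℕ | 1 ≤ t.2.2.1 ∧ 1 ≤ t.2.2.2 ∧
      t.1 + 2 * t.2.2.1 ≤ F m ∧ t.2.1 + 2 * t.2.2.2 ≤ F n ∧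
      subarr (fibArr m n) t.1 t.2.1 t.2.2.1 t.2.2.2
        = subarr (fibArr m n) t.1 (t.2.1 + t.2.2.2) t.2.2.1 t.2.2.2 ∧
      subarr (fibArr m n) t.1 t.2.1 t.2.2.1 t.2.2.2
        = subarr (fibArr m n) (t.1 + t.2.2.1) t.2.1 t.2.2.1 t.2.2.2 ∧
      subarr (fibArr m n) t.1 t.2.1 t.2.2.1 t.2.2.2
        = subarr (fibArr m n) (t.1 + t.2.2.1) (t.2.1 + t.2.2.2) t.2.2.1 t.2.2.2}.ncard
      = R m * R n) ∧
    ({t : ℕ × ℕ × ℕ × ℕ | 1 ≤ t.2.2.1 ∧ 1 ≤ t.2.2.2 ∧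
      t.1 + 2 * t.2.2.1 ≤ F m ∧ t.2.1 + 2 * t.2.2.2 ≤ F n ∧
      subarr (fibArr m n) t.1 t.2.1 t.2.2.1 t.2.2.2
        = subarr (fibArr m n) (t.1 + t.2.2.1) (t.2.1 + t.2.2.2) t.2.2.1 t.2.2.2}.ncard
      = R m * R n) :=
  stmt5_general m n
end

section
/- For all k,l ≥ 1, the two-dimensional infinite Fibonacci word f_{∞,∞} has exactly (k+1)(l+1) distinct factors of size (k,l); that is, the number of distinct functions X : Fin k × Fin l → Fin 2 × Fin 2 for which there exist i₀,j₀ ∈ ℕ with X(p,q) = f_{∞,∞}(i₀+p, j₀+q) for all p,q is (k+1)(l+1). -/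
/-!
The two-dimensional word is a product: `f_{∞,∞}(i, j) = (u i, u j)` for the one-dimensional
infinite Fibonacci word `u`, so its `(k, l)`-factors are the pairs of a `k`-factor and an
`l`-factor of `u`, and it suffices that `u` has `n + 1` factors of length `n`.

With `α = (√5 - 1) / 2`, `u` is the mechanical word `u i = ⌊(i + 2) α⌋ - ⌊(i + 1) α⌋`. The
recursion `f_{n+2} = f_{n+1} f_n` amounts to `u (F (n + 1) + r) = u r`, which holds because
`F (n + 1) α` lies within `α ^ (n + 2)` of an integer, while `q α` for `1 ≤ q ≤ F (n + 1)` is at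
least that far from every integer (Fibonacci numbers are the best approximation denominators).

The factor of length `n` at `i` is determined by the floors `⌊x + j α⌋`, `j ≤ n`, with
`x = {(i + 1) α}`, hence by which of the `n` distinct points `1 - {j α}`, `1 ≤ j ≤ n`, lie below
`x`, hence (these sets being nested) by how many do. Since the points `x` are dense in `[0, 1)`, all `n + 1` counts occur.
-/

namespace FibonacciWord

lemma ncard_range_eq_of_forall_eq_iff {ι X Y : Type*} {f : ι → X} {g : ι → Y}
    (h : ∀ i j, f i = f j ↔ g i = g j) : (Set.range f).ncard = (Set.range g).ncard := by
  refine Set.ncard_congr (fun _ hx => g hx.choose) (fun _ _ => Set.mem_range_self _)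
    (fun x y hx hy hxy => ?_) ?_
  · rw [← hx.choose_spec, ← hy.choose_spec]
    exact (h _ _).2 hxy
  · rintro _ ⟨i, rfl⟩
    exact ⟨f i, Set.mem_range_self i, (h _ _).1 (Set.mem_range_self i).choose_spec⟩

lemma prodMap_eq_prodMap_iff {ι κ X Y : Type*} [Nonempty ι] [Nonempty κ] {f f' : ι → X}
    {g g' : κ → Y} : Prod.map f g = Prod.map f' g' ↔ (f, g) = (f', g') := by
  refine ⟨fun h => ?_, fun h => by simp_all⟩
  obtain ⟨i⟩ := ‹Nonempty ι›
  obtain ⟨k⟩ := ‹Nonempty κ›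
  ext x
  exacts [congrArg Prod.fst (congrFun h (x, k)), congrArg Prod.snd (congrFun h (i, x))]

section LowerCuts

variable {X : Type*} [LinearOrder X] {T : Finset X}

lemma filter_le_eq_iff_card_eq {x y : X} :
    T.filter (· ≤ x) = T.filter (· ≤ y) ↔ (T.filter (· ≤ x)).card = (T.filter (· ≤ y)).card := by
  refine ⟨congrArg _, fun h => ?_⟩
  wlog hxy : x ≤ y generalizing x y
  · exact (this h.symm (le_of_not_ge hxy)).symm
  exact Finset.eq_of_subset_of_card_le
    (Finset.monotone_filter_right _ fun _ _ hs => hs.trans hxy) h.ge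

lemma exists_card_filter_le_eq {a b : X} (hab : a < b) (hT : ∀ s ∈ T, s ∈ Set.Ioo a b) :
    ∀ t ≤ T.card, ∃ x ∈ Set.Ico a b, (T.filter (· ≤ x)).card = t
  | 0, _ => ⟨a, ⟨le_rfl, hab⟩, by simpa using fun s hs => (hT s hs).1⟩
  | t + 1, ht => by
    obtain ⟨x, hx, hxt⟩ := exists_card_filter_le_eq hab hT t (by omega)
    have hne : (T.filter (x < ·)).Nonempty := by
      by_contra hempty
      rw [Finset.not_nonempty_iff_eq_empty, Finset.filter_eq_empty_iff] at hempty
      rw [Finset.filter_true_of_mem fun s hs => not_lt.1 (hempty hs)] at hxt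
      omega
    set s := (T.filter (x < ·)).min' hne
    have hs : s ∈ T ∧ x < s := Finset.mem_filter.1 ((T.filter (x < ·)).min'_mem hne)
    have hcut : T.filter (· ≤ s) = insert s (T.filter (· ≤ x)) := by
      ext y
      simp only [Finset.mem_filter, Finset.mem_insert]
      constructor
      · rintro ⟨hy, hys⟩
        by_cases hyx : y ≤ x
        · exact Or.inr ⟨hy, hyx⟩
        · exact Or.inl (le_antisymm hys
            (Finset.min'_le _ _ (Finset.mem_filter.2 ⟨hy, not_le.1 hyx⟩)))
      · rintro (rfl | ⟨hy, hyx⟩)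
        · exact ⟨hs.1, le_rfl⟩
        · exact ⟨hy, hyx.trans hs.2.le⟩
    refine ⟨s, ⟨hx.1.trans hs.2.le, (hT s hs.1).2⟩, ?_⟩
    rw [hcut, Finset.card_insert_of_notMem (by simp [hs.2]), hxt]

lemma exists_filter_le_eq_of_dense {a b : X} {D : Set X}
    (hD : ∀ c d, a ≤ c → c < d → d ≤ b → ∃ x ∈ D, c < x ∧ x < d) {x : X} (hx : x ∈ Set.Ico a b) :
    ∃ d ∈ D, T.filter (· ≤ d) = T.filter (· ≤ x) := by
  set e := (insert b (T.filter (x < ·))).min' (Finset.insert_nonempty _ _)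
  have hxe : x < e := by
    refine (Finset.lt_min'_iff _ _).2 fun s hs => ?_
    rcases Finset.mem_insert.1 hs with rfl | hs
    exacts [hx.2, (Finset.mem_filter.1 hs).2]
  obtain ⟨d, hdD, hxd, hde⟩ :=
    hD x e hx.1 hxe (Finset.min'_le _ _ (Finset.mem_insert_self _ _))
  refine ⟨d, hdD, Finset.filter_inj'.2 fun s hs => ?_⟩
  refine ⟨fun hsd => not_lt.1 fun hxs => ?_, fun hsx => hsx.trans hxd.le⟩
  have : e ≤ s := Finset.min'_le _ _ (by simp [hs, hxs])
  exact (hsd.trans_lt hde).not_ge this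

end LowerCuts

lemma exists_fract_nat_mul_mem_Ioo {y a b : ℝ} (ha : 0 ≤ a) (hb : b ≤ 1)
    (hy₀ : 0 < Int.fract y) (hy : Int.fract y < b - a) :
    ∃ j : ℕ, 1 ≤ j ∧ Int.fract (j * y) ∈ Set.Ioo a b := by
  set δ := Int.fract y
  have hfloor := Nat.floor_le (div_nonneg ha hy₀.le)
  have hlt := Nat.lt_floor_add_one (a / δ)
  rw [le_div_iff₀ hy₀] at hfloor
  rw [div_lt_iff₀ hy₀] at hlt
  refine ⟨⌊a / δ⌋₊ + 1, by omega, ?_⟩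
  have hfract : Int.fract (((⌊a / δ⌋₊ + 1 : ℕ) : ℝ) * y) = (⌊a / δ⌋₊ + 1 : ℕ) * δ := by
    rw [Int.fract_eq_iff]
    push_cast
    refine ⟨by positivity, by linarith, (⌊a / δ⌋₊ + 1 : ℕ) * ⌊y⌋, ?_⟩
    push_cast
    linear_combination -(⌊a / δ⌋₊ + 1 : ℝ) * Int.floor_add_fract y
  rw [hfract]
  push_cast
  constructor <;> linarith

lemma floor_add_eq_ite {x : ℝ} (hx : x ∈ Set.Ico 0 1) (y : ℝ) :
    ⌊y + x⌋ = ⌊y⌋ + if 1 - Int.fract y ≤ x then 1 else 0 := by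
  have := Int.floor_add_fract y
  have := Int.fract_nonneg y
  have := Int.fract_lt_one y
  rw [Int.floor_eq_iff]
  split_ifs <;> push_cast <;> constructor <;> linarith [hx.1, hx.2]

lemma abs_sub_round_intCast_add (z : ℤ) (y : ℝ) : |z + y - round (z + y)| = |y - round y| := by
  rw [round_intCast_add, Int.cast_add]
  ring_nf

lemma abs_sub_round_le_abs_add_sub_round (y ε : ℝ) :
    |y - round y| ≤ |y + ε - round (y + ε)| + |ε| :=
  calc |y - round y| ≤ |y - round (y + ε)| := round_le y _
    _ = |(y + ε - round (y + ε)) - ε| := by ring_nf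
    _ ≤ |y + ε - round (y + ε)| + |ε| := abs_sub _ _

lemma floor_add_eq_floor {y ε : ℝ} (h : |ε| ≤ |y - round y|) (hy : ∀ k : ℤ, y + ε ≠ k) :
    ⌊y + ε⌋ = ⌊y⌋ := by
  rw [abs_sub_round_eq_min, le_min_iff] at h
  have := Int.floor_add_fract y
  rw [Int.floor_eq_iff]
  refine ⟨by linarith [neg_abs_le ε], lt_of_le_of_ne (by linarith [le_abs_self ε]) ?_⟩
  exact_mod_cast hy (⌊y⌋ + 1)

lemma F_add_two (n : ℕ) : F (n + 2) = F (n + 1) + F n := rfl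

lemma F_eq_fib : ∀ n, F n = Nat.fib (n + 1)
  | 0 => rfl
  | 1 => rfl
  | n + 2 => by
    rw [F_add_two, F_eq_fib (n + 1), F_eq_fib n, Nat.fib_add_two (n := n + 1), add_comm]

lemma F_pos (n : ℕ) : 0 < F n := by
  rw [F_eq_fib]
  exact Nat.fib_pos.2 n.succ_pos

lemma lt_F_succ (n : ℕ) : n < F (n + 1) := by
  have := Nat.le_fib_add_one (n + 2)
  rw [F_eq_fib, show n + 1 + 1 = n + 2 from rfl]
  omega

lemma length_fibWord : ∀ n, (fibWord n).length = F n
  | 0 => rfl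
  | 1 => rfl
  | n + 2 => by
    rw [fibWord, List.length_append, length_fibWord (n + 1), length_fibWord n, F_add_two]

lemma getD_fibWord_add_two (n i : ℕ) : (fibWord (n + 2)).getD i 0 =
    if i < F (n + 1) then (fibWord (n + 1)).getD i 0 else (fibWord n).getD (i - F (n + 1)) 0 := by
  rw [fibWord]
  split_ifs with h
  · exact List.getD_append _ _ _ _ (by rwa [length_fibWord])
  · rw [List.getD_append_right _ _ _ _ (by rw [length_fibWord]; omega), length_fibWord]

theorem fibArr_eq (m n i j : ℕ) (hi : i < F m) (hj : j < F n) :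
    fibArr m n i j = ((fibWord m).getD i 0, (fibWord n).getD j 0) := by
  fun_induction fibArr m n i j with
  | case1 i j | case2 i j | case3 i j | case4 i j =>
    obtain ⟨rfl, rfl⟩ : i = 0 ∧ j = 0 := by simp_all [F]
    rfl
  | case5 n i j h ih | case7 n i j h ih =>
    rw [getD_fibWord_add_two, if_pos h, ih hi h]
  | case6 n i j h ih | case8 n i j h ih =>
    rw [getD_fibWord_add_two, if_neg h, ih hi (by rw [F_add_two] at hj; omega)]
  | case9 m n i j h ih =>
    rw [getD_fibWord_add_two, if_pos h, ih h hj]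
  | case10 m n i j h ih =>
    rw [getD_fibWord_add_two, if_neg h, ih (by rw [F_add_two] at hi; omega) hj]

open Real goldenRatio

noncomputable def α : ℝ := -ψ

lemma α_pos : 0 < α := neg_pos.2 goldenConj_neg

lemma α_lt_one : α < 1 := by
  have := neg_one_lt_goldenConj
  rw [α]
  linarith

lemma α_sq : α ^ 2 = 1 - α := by
  rw [α, neg_sq, goldenConj_sq]
  ring

lemma one_half_lt_α : 1 / 2 < α := by nlinarith [α_sq, α_pos]

lemma α_lt_two_thirds : α < 2 / 3 := by nlinarith [α_sq, α_pos]

lemma intCast_mul_α_ne_intCast {q : ℤ} (hq : q ≠ 0) (k : ℤ) : (q : ℝ) * α ≠ k :=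
  (goldenConj_irrational.neg.intCast_mul hq).ne_int k

lemma F_succ_mul_α (n : ℕ) : (F (n + 1) : ℝ) * α = F n - (-α) ^ (n + 2) := by
  have := goldenConj_mul_fib_succ_add_fib (n + 1)
  rw [F_eq_fib, F_eq_fib, α, neg_neg]
  linarith

lemma abs_α_sub_round : |α - round α| = α ^ 2 := by
  rw [abs_sub_round_eq_min, Int.fract_eq_self.2 ⟨α_pos.le, α_lt_one⟩, α_sq,
    min_eq_right (by linarith [one_half_lt_α])]

theorem α_pow_le_abs_mul_sub_round : ∀ n, 1 ≤ n → ∀ q : ℕ, 1 ≤ q → q ≤ F n →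
    α ^ (n + 1) ≤ |q * α - round (q * α)|
  | 1, _, q, _, hqF => by
    obtain rfl : q = 1 := by simp only [F] at hqF; omega
    simp [abs_α_sub_round]
  | 2, _, q, hq, hqF => by
    show α ^ 3 ≤ _
    have hα3 : α ^ 3 < α ^ 2 := pow_lt_pow_right_of_lt_one₀ α_pos α_lt_one (by norm_num)
    obtain rfl | rfl : q = 1 ∨ q = 2 := by simp only [F] at hqF; omega
    · simpa [abs_α_sub_round] using hα3.le
    · have h2 : ((2 : ℕ) : ℝ) * α = (1 : ℤ) + α ^ 3 := by
        have := F_succ_mul_α 1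
        simp only [F] at this
        push_cast at this ⊢
        linarith
      rw [h2, abs_sub_round_intCast_add, abs_sub_round_eq_min,
        Int.fract_eq_self.2 ⟨(pow_pos α_pos 3).le, by linarith [α_sq, α_pos]⟩]
      exact le_min le_rfl (by linarith [α_sq, one_half_lt_α])
  | n + 3, _, q, hq, hqF => by
    by_cases hq' : q ≤ F (n + 2)
    · exact (pow_le_pow_of_le_one α_pos.le α_lt_one.le (by omega)).trans
        (α_pow_le_abs_mul_sub_round (n + 2) (by omega) q hq hq')
    obtain ⟨r, hr, hrF, rfl⟩ : ∃ r, 1 ≤ r ∧ r ≤ F (n + 1) ∧ q = F (n + 2) + r :=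
      ⟨q - F (n + 2), by omega, by have : F (n + 3) = F (n + 2) + F (n + 1) := rfl; omega,
        by omega⟩
    have hr' := α_pow_le_abs_mul_sub_round (n + 1) (by omega) r hr hrF
    have hshift : ((F (n + 2) + r : ℕ) : ℝ) * α =
        (F (n + 1) : ℤ) + (r * α + -(-α) ^ (n + 3)) := by
      push_cast
      linear_combination F_succ_mul_α (n + 1)
    have := abs_sub_round_le_abs_add_sub_round (r * α) (-(-α) ^ (n + 3))
    rw [abs_neg, abs_pow, abs_neg, abs_of_pos α_pos] at this
    rw [hshift, abs_sub_round_intCast_add]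
    have : α ^ (n + 4) = α ^ (n + 2) - α ^ (n + 3) := by
      linear_combination α ^ (n + 2) * α_sq
    linarith

lemma floor_mul_α_sub_eq_floor {n q : ℕ} (hq : 1 ≤ q) (hqF : q ≤ F (n + 1)) :
    ⌊q * α - (-α) ^ (n + 2)⌋ = ⌊q * α⌋ := by
  rw [sub_eq_add_neg]
  refine floor_add_eq_floor ?_ fun k hk => ?_
  · rw [abs_neg, abs_pow, abs_neg, abs_of_pos α_pos]
    exact α_pow_le_abs_mul_sub_round (n + 1) (by omega) q hq hqF
  · refine intCast_mul_α_ne_intCast (q := q + F (n + 1)) (by omega) (k + F n) ?_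
    push_cast
    linear_combination hk + F_succ_mul_α n

noncomputable def mechLetter (z : ℝ) : Fin 2 := if ⌊z + α⌋ = ⌊z⌋ then 0 else 1

noncomputable def fibInf (i : ℕ) : Fin 2 := mechLetter ((i + 1) * α)

lemma floor_add_α_eq_or (z : ℝ) : ⌊z + α⌋ = ⌊z⌋ ∨ ⌊z + α⌋ = ⌊z⌋ + 1 := by
  have h₀ : ⌊z⌋ ≤ ⌊z + α⌋ := Int.floor_mono (by linarith [α_pos])
  have h₁ : ⌊z + α⌋ ≤ ⌊z⌋ + 1 := by
    rw [← Int.floor_add_one]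
    exact Int.floor_mono (by linarith [α_lt_one])
  omega

lemma mechLetter_eq_iff {z z' : ℝ} (h : ⌊z⌋ = ⌊z'⌋) :
    mechLetter z = mechLetter z' ↔ ⌊z + α⌋ = ⌊z' + α⌋ := by
  unfold mechLetter
  rcases floor_add_α_eq_or z with h₁ | h₁ <;> rcases floor_add_α_eq_or z' with h₂ | h₂ <;>
    simp [h, h₁, h₂]

lemma mechLetter_intCast_add (k : ℤ) (z : ℝ) : mechLetter (k + z) = mechLetter z := by
  simp only [mechLetter, add_assoc, Int.floor_intCast_add, add_right_inj]

lemma fibInf_F_add {n r : ℕ} (hn : 1 ≤ n) (hr : r < F n) : fibInf (F (n + 1) + r) = fibInf r := by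
  have hF : F n + 1 ≤ F (n + 1) := by
    obtain ⟨m, rfl⟩ : ∃ m, n = m + 1 := ⟨n - 1, by omega⟩
    have := F_pos m
    rw [F_add_two]
    omega
  have h₁ := floor_mul_α_sub_eq_floor (n := n) (q := r + 1) (by omega) (by omega)
  have h₂ := floor_mul_α_sub_eq_floor (n := n) (q := r + 1 + 1) (by omega) (by omega)
  push_cast at h₁ h₂
  calc fibInf (F (n + 1) + r) = mechLetter ((F n : ℤ) + ((r + 1) * α - (-α) ^ (n + 2))) := by
        unfold fibInf
        congr 1
        push_cast
        linear_combination F_succ_mul_α n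
    _ = mechLetter ((r + 1) * α - (-α) ^ (n + 2)) := mechLetter_intCast_add _ _
    _ = fibInf r := by
        refine (mechLetter_eq_iff h₁).2 ?_
        rwa [sub_add_eq_add_sub, ← add_one_mul]

lemma fibInf_zero : fibInf 0 = 1 := by
  have h₀ : ⌊α⌋ = 0 := Int.floor_eq_iff.2 ⟨by simpa using α_pos.le, by simpa using α_lt_one⟩
  have h₁ : ⌊α + α⌋ = 1 :=
    Int.floor_eq_iff.2 ⟨by push_cast; linarith [one_half_lt_α], by push_cast; linarith [α_lt_one]⟩
  simp [fibInf, mechLetter, h₀, h₁]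

lemma fibInf_one : fibInf 1 = 0 := by
  have h₀ : ⌊2 * α⌋ = 1 :=
    Int.floor_eq_iff.2 ⟨by push_cast; linarith [one_half_lt_α], by push_cast; linarith [α_lt_one]⟩
  have h₁ : ⌊2 * α + α⌋ = 1 := Int.floor_eq_iff.2
    ⟨by push_cast; linarith [one_half_lt_α], by push_cast; linarith [α_lt_two_thirds]⟩
  norm_num [fibInf, mechLetter, h₀, h₁]

lemma getD_fibWord : ∀ n, 1 ≤ n → ∀ i < F n, (fibWord n).getD i 0 = fibInf i
  | 1, _, i, hi => by
    obtain rfl : i = 0 := by simp only [F] at hi; omega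
    rw [fibInf_zero]
    rfl
  | 2, _, i, hi => by
    obtain rfl | rfl : i = 0 ∨ i = 1 := by simp only [F] at hi; omega
    · rw [fibInf_zero]; rfl
    · rw [fibInf_one]; rfl
  | n + 3, _, i, hi => by
    rw [getD_fibWord_add_two]
    split_ifs with h
    · exact getD_fibWord (n + 2) (by omega) i h
    · have hi' : i - F (n + 1 + 1) < F (n + 1) := by
        have : F (n + 3) = F (n + 1 + 1) + F (n + 1) := rfl
        omega
      rw [getD_fibWord (n + 1) (by omega) _ hi', ← fibInf_F_add (by omega) hi',
        Nat.add_sub_cancel' (by omega)]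

lemma forall_mechLetter_eq_iff {x y : ℝ} (h : ⌊x⌋ = ⌊y⌋) : ∀ n : ℕ,
    (∀ p < n, mechLetter (x + p * α) = mechLetter (y + p * α)) ↔
      ∀ j < n + 1, ⌊x + j * α⌋ = ⌊y + j * α⌋
  | 0 => by simp [h]
  | n + 1 => by
    rw [Nat.forall_lt_succ_right, Nat.forall_lt_succ_right (n := n + 1),
      forall_mechLetter_eq_iff h n]
    refine and_congr_right fun hfloor => ?_
    rw [mechLetter_eq_iff (hfloor n n.lt_succ_self), Nat.cast_succ, add_one_mul, ← add_assoc,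
      ← add_assoc]

noncomputable def threshold (j : ℕ) : ℝ := 1 - Int.fract (j * α)

lemma threshold_zero : threshold 0 = 1 := by simp [threshold]

lemma threshold_mem_Ioo {j : ℕ} (hj : 1 ≤ j) : threshold j ∈ Set.Ioo 0 1 := by
  have hne : Int.fract ((j : ℝ) * α) ≠ 0 := by
    rw [Int.fract_ne_zero_iff]
    rintro ⟨k, hk⟩
    exact intCast_mul_α_ne_intCast (q := j) (by omega) k (by rw [hk]; push_cast; ring)
  have := Int.fract_lt_one ((j : ℝ) * α)
  have := (Int.fract_nonneg ((j : ℝ) * α)).lt_of_ne' hne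
  constructor <;> simp only [threshold] <;> linarith

lemma threshold_injective : Function.Injective threshold := by
  intro j j' h
  obtain ⟨k, hk⟩ := Int.fract_eq_fract.1 (by simpa [threshold] using h)
  by_contra hne
  exact intCast_mul_α_ne_intCast (q := j - j') (sub_ne_zero.2 (by exact_mod_cast hne)) k
    (by push_cast; linarith)

noncomputable def thresholds (n : ℕ) : Finset ℝ := (Finset.Icc 1 n).image threshold

lemma card_thresholds (n : ℕ) : (thresholds n).card = n := by
  rw [thresholds, Finset.card_image_of_injective _ threshold_injective, Nat.card_Icc,
    Nat.add_sub_cancel]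

lemma mem_Ioo_of_mem_thresholds {n : ℕ} {s : ℝ} (hs : s ∈ thresholds n) : s ∈ Set.Ioo 0 1 := by
  obtain ⟨j, hj, rfl⟩ := Finset.mem_image.1 hs
  exact threshold_mem_Ioo (Finset.mem_Icc.1 hj).1

lemma forall_floor_eq_iff {x y : ℝ} (hx : x ∈ Set.Ico 0 1) (hy : y ∈ Set.Ico 0 1) (n : ℕ) :
    (∀ j < n + 1, ⌊x + j * α⌋ = ⌊y + j * α⌋) ↔
      (thresholds n).filter (· ≤ x) = (thresholds n).filter (· ≤ y) := by
  have key (j : ℕ) : ⌊x + j * α⌋ = ⌊y + j * α⌋ ↔ (threshold j ≤ x ↔ threshold j ≤ y) := by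
    rw [add_comm x, add_comm y, floor_add_eq_ite hx, floor_add_eq_ite hy]
    change _ + (if threshold j ≤ x then 1 else 0) = _ + (if threshold j ≤ y then 1 else 0) ↔ _
    split_ifs with h₁ h₂ h₂ <;> simp [h₁, h₂]
  rw [Finset.filter_inj', thresholds, Finset.forall_mem_image]
  simp only [key, Finset.mem_Icc]
  constructor
  · exact fun h j hj => h j (by omega)
  · intro h j hj
    rcases Nat.eq_zero_or_pos j with rfl | hj₀
    · rw [threshold_zero]
      exact iff_of_false (by linarith [hx.2]) (by linarith [hy.2])
    · exact h ⟨hj₀, by omega⟩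

lemma exists_fract_mul_α_mem_Ioo {a b : ℝ} (ha : 0 ≤ a) (hab : a < b) (hb : b ≤ 1) :
    ∃ i : ℕ, Int.fract ((i + 1) * α) ∈ Set.Ioo a b := by
  obtain ⟨N, hN⟩ := exists_pow_lt_of_lt_one (sub_pos.2 hab) α_lt_one
  have hsmall : Int.fract (F (2 * N + 2) * α) = α ^ (2 * N + 3) := by
    rw [Int.fract_eq_iff]
    refine ⟨(pow_pos α_pos _).le, pow_lt_one₀ α_pos.le α_lt_one (by omega), F (2 * N + 1), ?_⟩
    rw [F_succ_mul_α, Odd.neg_pow ⟨N + 1, by ring⟩]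
    push_cast
    ring
  have hδ : α ^ (2 * N + 3) < b - a :=
    (pow_le_pow_of_le_one α_pos.le α_lt_one.le (by omega)).trans_lt hN
  obtain ⟨j, hj, hjab⟩ :=
    exists_fract_nat_mul_mem_Ioo ha hb (hsmall ▸ pow_pos α_pos _) (hsmall ▸ hδ)
  refine ⟨j * F (2 * N + 2) - 1, ?_⟩
  have hpos : 1 ≤ j * F (2 * N + 2) := Nat.mul_pos hj (F_pos _)
  rwa [← Nat.cast_add_one, Nat.sub_add_cancel hpos, Nat.cast_mul, mul_assoc]

lemma fibInf_add (i p : ℕ) : fibInf (i + p) = mechLetter (Int.fract ((i + 1) * α) + p * α) := by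
  rw [← mechLetter_intCast_add ⌊((i : ℝ) + 1) * α⌋, ← add_assoc, Int.floor_add_fract, fibInf]
  congr 1
  push_cast
  ring

theorem fibInf_factor_eq_iff (n i i' : ℕ) :
    (fun p : Fin n => fibInf (i + p)) = (fun p : Fin n => fibInf (i' + p)) ↔
      ((thresholds n).filter (· ≤ Int.fract ((i + 1) * α))).card =
        ((thresholds n).filter (· ≤ Int.fract ((i' + 1) * α))).card := by
  have hIco (z : ℝ) : Int.fract z ∈ Set.Ico 0 1 := ⟨Int.fract_nonneg z, Int.fract_lt_one z⟩
  rw [funext_iff, Fin.forall_iff]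
  simp only [fibInf_add]
  rw [forall_mechLetter_eq_iff (by rw [Int.floor_fract, Int.floor_fract]),
    forall_floor_eq_iff (hIco _) (hIco _), filter_le_eq_iff_card_eq]

theorem ncard_range_fibInf_factor (n : ℕ) :
    (Set.range fun i (p : Fin n) => fibInf (i + p)).ncard = n + 1 := by
  rw [ncard_range_eq_of_forall_eq_iff (fibInf_factor_eq_iff n),
    show Set.range (fun i : ℕ => ((thresholds n).filter (· ≤ Int.fract ((i + 1) * α))).card)
      = ↑(Finset.range (n + 1)) from ?_, Set.ncard_coe_finset, Finset.card_range]
  ext t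
  simp only [Set.mem_range, Finset.coe_range, Set.mem_Iio]
  constructor
  · rintro ⟨i, rfl⟩
    exact Nat.lt_succ_of_le ((Finset.card_filter_le _ _).trans (card_thresholds n).le)
  · intro ht
    obtain ⟨x, hx, hxt⟩ := exists_card_filter_le_eq (T := thresholds n) one_pos
      (fun _ => mem_Ioo_of_mem_thresholds) t (by rw [card_thresholds]; omega)
    obtain ⟨_, ⟨i, rfl⟩, hcut⟩ := exists_filter_le_eq_of_dense (T := thresholds n)
      (D := Set.range fun i : ℕ => Int.fract ((i + 1) * α))
      (fun c d hc hcd hd => by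
        obtain ⟨i, hi⟩ := exists_fract_mul_α_mem_Ioo hc hcd hd
        exact ⟨_, ⟨i, rfl⟩, hi⟩) hx
    exact ⟨i, by rw [hcut, hxt]⟩

end FibonacciWord

open FibonacciWord in
/-- for k,l ≥ 1, the 2D infinite Fibonacci word f_{∞,∞} (the unique function
agreeing with every f_{m,n}, m,n ≥ 1, on its domain) has exactly (k+1)(l+1) distinct factors
of size (k,l). -/
theorem stmt14 (w : ℕ × ℕ → Fin 2 × Fin 2)
    (hw : ∀ m n : ℕ, 1 ≤ m → 1 ≤ n → ∀ i < F m, ∀ j < F n, w (i, j) = fibArr m n i j)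
    (k l : ℕ) (hk : 1 ≤ k) (hl : 1 ≤ l) :
    {X : Fin k × Fin l → Fin 2 × Fin 2 |
      ∃ i₀ j₀ : ℕ, ∀ p : Fin k × Fin l, X p = w (i₀ + p.1.val, j₀ + p.2.val)}.ncard
      = (k + 1) * (l + 1) := by
  have hw' (i j : ℕ) : w (i, j) = (fibInf i, fibInf j) := by
    rw [hw _ _ (by omega) (by omega) i (lt_F_succ i) j (lt_F_succ j),
      fibArr_eq _ _ _ _ (lt_F_succ i) (lt_F_succ j),
      getD_fibWord _ (by omega) i (lt_F_succ i), getD_fibWord _ (by omega) j (lt_F_succ j)]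
  let factor (n i : ℕ) (p : Fin n) : Fin 2 := fibInf (i + p)
  have hset : {X : Fin k × Fin l → Fin 2 × Fin 2 |
      ∃ i₀ j₀ : ℕ, ∀ p : Fin k × Fin l, X p = w (i₀ + p.1.val, j₀ + p.2.val)} =
      Set.range fun ij : ℕ × ℕ => Prod.map (factor k ij.1) (factor l ij.2) := by
    ext X
    simp [funext_iff, hw', factor, eq_comm]
  have : NeZero k := ⟨by omega⟩
  have : NeZero l := ⟨by omega⟩
  rw [hset, ncard_range_eq_of_forall_eq_iff (g := Prod.map (factor k) (factor l))
      fun _ _ => prodMap_eq_prodMap_iff,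
    Set.range_prodMap, Set.ncard_prod, ncard_range_fibInf_factor, ncard_range_fibInf_factor]
end
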